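/- arXiv:1901.01710 — 4 statements merged into one kernel-verified Lean document; each statement's English description precedes it below -/
import Mathlib

section
/- A 0-covered set of the family F of frequent itemsets that is itself contained in F and is minimal under inclusion equals the set of closed frequent itemsets: every element of such a 0-covered set with no proper frequent superset of equal support is closed, and conversely every closed frequent itemset must belong to any 0-covered set of F that is a subset of F. -/
/-- Support of itemset `α` at timestamp `n` in the stream `t`. -/
def sup (t : ℕ → Finset ℕ) (α : Finset ℕ) (i : ℕ) : ℕ :=
  ((Finset.Icc 1 i).filter (fun j => α ⊆ t j)).card

lemma sup_anti (t : ℕ → Finset ℕ) {α β : Finset ℕ} (h : α ⊆ β) (i : ℕ) :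
    sup t β i ≤ sup t α i := by
  apply Finset.card_le_card
  exact Finset.monotone_filter_right _ (fun j _ hj => h.trans hj)

/-- Every closed frequent itemset belongs to any `0`-covered set `Q` of the family of
frequent itemsets that is itself contained in the family of frequent itemsets. -/
theorem stmt3 (t : ℕ → Finset ℕ) (n : ℕ) (σ : ℝ) (Q : Set (Finset ℕ))
    (hQF : ∀ β ∈ Q, σ * n < (sup t β n : ℝ))
    (hcov : ∀ α : Finset ℕ, σ * n < (sup t α n : ℝ) →
      ∃ β ∈ Q, α ⊆ β ∧ sup t α n ≤ sup t β n)
    (α : Finset ℕ)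
    (hfreq : σ * n < (sup t α n : ℝ))
    (hclosed : ∀ β : Finset ℕ, α ⊂ β → σ * n < (sup t β n : ℝ) →
      sup t β n ≠ sup t α n) :
    α ∈ Q := by
  obtain ⟨β, hβQ, hsub, hle⟩ := hcov α hfreq
  have heq : sup t β n = sup t α n := le_antisymm (sup_anti t hsub n) hle
  rcases eq_or_lt_of_le hsub with h | h
  · exact h ▸ hβQ
  · exact absurd heq (hclosed β h (hQF β hβQ))
end

section
/- Incremental closedness: defining C_0 = ∅ and C_i = C_{i-1} ∪ {t_i} ∪ {α ∩ t_i : α ∈ C_{i-1}, α ∩ t_i ≠ ∅}, the family C_n consists exactly of the nonempty itemsets that are intersections of some nonempty subset of transactions {t_j : j ∈ S}, S ⊆ {1,...,n}, S ≠ ∅ — i.e., C_n is the set of nonempty intersection-closed itemsets generated by the transactions. -/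
/-!
An intersection over a nonempty `S ⊆ {1, …, n+1}` either avoids `n+1`, or is `t (n+1)` itself,
or is `t (n+1)` intersected with the intersection over the nonempty set `S \ {n+1}`: these are
the three parts of the recurrence, so induction on `n` goes through. The nonemptiness filter
commutes with this splitting because `α ∩ t (n+1)` nonempty forces `α` nonempty.
-/

/-- The incremental family of closed itemsets:
`C 0 = ∅`, `C (i+1) = C i ∪ {t (i+1)} ∪ {α ∩ t (i+1) : α ∈ C i, α ∩ t (i+1) ≠ ∅}`. -/
def Cfam (t : ℕ → Finset ℕ) : ℕ → Set (Finset ℕ)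
  | 0 => ∅
  | (i + 1) =>
      Cfam t i ∪ {t (i + 1)} ∪
        {β | ∃ α ∈ Cfam t i, β = α ∩ t (i + 1) ∧ β.Nonempty}

namespace Finset

variable {ι α : Type*} [SemilatticeInf α] (t : ι → α)

def subsetInfs (s : Finset ι) : Set α :=
  {x | ∃ S ⊆ s, ∃ hS : S.Nonempty, S.inf' hS t = x}

@[simp]
lemma subsetInfs_empty : subsetInfs t ∅ = ∅ := by
  ext x
  simp only [subsetInfs, subset_empty, Set.mem_ofPred_eq, Set.mem_empty_iff_false, iff_false]
  rintro ⟨S, rfl, hS, -⟩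
  exact not_nonempty_empty hS

lemma subsetInfs_insert [DecidableEq ι] (s : Finset ι) (a : ι) :
    subsetInfs t (insert a s) = subsetInfs t s ∪ {t a} ∪ (· ⊓ t a) '' subsetInfs t s := by
  ext x
  simp only [subsetInfs, Set.mem_union, Set.mem_singleton_iff, Set.mem_image, Set.mem_ofPred_eq]
  constructor
  · rintro ⟨S, hSs, hS, rfl⟩
    by_cases ha : a ∈ S
    · obtain hsingle | hne := (S.erase a).eq_empty_or_nonempty
      · have : S = {a} := by simpa [erase_eq_empty_iff, hS.ne_empty] using hsingle
        subst this
        exact .inl (.inr (inf'_singleton ..))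
      · refine .inr ⟨_, ⟨S.erase a, subset_insert_iff.1 hSs, hne, rfl⟩, ?_⟩
        rw [inf_comm, ← inf'_insert hne]
        simp only [insert_erase ha]
    · exact .inl (.inl ⟨S, (subset_insert_iff_of_notMem ha).1 hSs, hS, rfl⟩)
  · rintro ((⟨S, hSs, hS, rfl⟩ | rfl) | ⟨_, ⟨S, hSs, hS, rfl⟩, rfl⟩)
    · exact ⟨S, hSs.trans (subset_insert a s), hS, rfl⟩
    · exact ⟨{a}, singleton_subset_iff.2 (mem_insert_self a s), singleton_nonempty a,
        inf'_singleton ..⟩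
    · exact ⟨insert a S, insert_subset_insert a hSs, insert_nonempty a S,
        by rw [inf'_insert, inf_comm]⟩

end Finset

open Finset

lemma Cfam_eq_nonempty_subsetInfs (t : ℕ → Finset ℕ) (ht : ∀ j, (t j).Nonempty) (n : ℕ) :
    Cfam t n = {β | β ∈ subsetInfs t (Icc 1 n) ∧ β.Nonempty} := by
  induction n with
  | zero => simp [Cfam]
  | succ n ih =>
    ext β
    rw [← insert_Icc_right_eq_Icc_add_one (by omega), subsetInfs_insert, Cfam, ih]
    simp only [Set.mem_union, Set.mem_singleton_iff, Set.mem_image, Set.mem_ofPred_eq]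
    constructor
    · rintro ((⟨hβ, hne⟩ | rfl) | ⟨α, ⟨hα, -⟩, rfl, hne⟩)
      · exact ⟨.inl (.inl hβ), hne⟩
      · exact ⟨.inl (.inr rfl), ht _⟩
      · exact ⟨.inr ⟨α, hα, rfl⟩, hne⟩
    · rintro ⟨(hβ | rfl) | ⟨α, hα, rfl⟩, hne⟩
      · exact .inl (.inl ⟨hβ, hne⟩)
      · exact .inl (.inr rfl)
      · exact .inr ⟨α, ⟨hα, hne.mono inter_subset_left⟩, rfl, hne⟩

/-- `C n` is exactly the family of nonempty intersections `⋂_{j ∈ S} t j` over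
nonempty `S ⊆ {1,…,n}`. -/
theorem stmt4 (t : ℕ → Finset ℕ) (n : ℕ) (ht : ∀ j, (t j).Nonempty) :
    Cfam t n =
      {β | ∃ (S : Finset ℕ) (hS : S.Nonempty),
        S ⊆ Finset.Icc 1 n ∧ β = S.inf' hS t ∧ β.Nonempty} := by
  rw [Cfam_eq_nonempty_subsetInfs t ht]
  ext β
  constructor
  · rintro ⟨⟨S, hSs, hS, rfl⟩, hne⟩
    exact ⟨S, hS, hSs, rfl, hne⟩
  · rintro ⟨S, hS, hSs, rfl, hne⟩
    exact ⟨⟨S, hSs, hS, rfl⟩, hne⟩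
end

section
/- The number of closed itemsets can be exponential in the maximum transaction length: for the stream of n = L transactions t_i = I \ {i} over I = {1,...,L+1}, the number of distinct nonempty intersections of nonempty subsets of transactions is 2^L − 1. -/
/-!
The intersection of the transactions `I \ {j}` over `j ∈ S` is `I \ S`, and complementation in
`I` is injective on subsets of `I`; so the closed itemsets are in bijection with the nonempty
subsets of `{1,…,L}`, of which there are `2 ^ L - 1`.
-/

namespace Finset

variable {α : Type*} [DecidableEq α]

theorem filter_forall_mem_sdiff_singleton (U S : Finset α) :
    U.filter (fun x => ∀ j ∈ S, x ∈ U \ {j}) = U \ S := by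
  ext x
  simp only [mem_filter, mem_sdiff, mem_singleton]
  constructor
  · rintro ⟨hxU, hx⟩
    exact ⟨hxU, fun hxS => (hx x hxS).2 rfl⟩
  · rintro ⟨hxU, hxS⟩
    exact ⟨hxU, fun j hj => ⟨hxU, fun hxj => hxS (hxj ▸ hj)⟩⟩

theorem sdiff_injOn_powerset (U : Finset α) : Set.InjOn (U \ ·) U.powerset := by
  intro S hS T hT hST
  rw [mem_coe, mem_powerset] at hS hT
  rw [← sdiff_sdiff_eq_self hS, ← sdiff_sdiff_eq_self hT]
  exact congrArg (U \ ·) hST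

theorem card_filter_nonempty_powerset (s : Finset α) :
    (s.powerset.filter (fun S => S.Nonempty)).card = 2 ^ s.card - 1 := by
  have hfilter : s.powerset.filter (fun S => S.Nonempty) = s.powerset.erase ∅ := by
    ext S
    simp [nonempty_iff_ne_empty, and_comm]
  rw [hfilter, card_erase_of_mem (empty_mem_powerset s), card_powerset]

end Finset

theorem stmt6_general (L : ℕ) :
    (((Finset.Icc 1 L).powerset.filter (fun S => S.Nonempty)).image
      (fun S => (Finset.Icc 1 (L + 1)).filter
        (fun x => ∀ j ∈ S, x ∈ Finset.Icc 1 (L + 1) \ {j}))).card = 2 ^ L - 1 := by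
  have hsub : (Finset.Icc 1 L).powerset ⊆ (Finset.Icc 1 (L + 1)).powerset :=
    Finset.powerset_mono.mpr (Finset.Icc_subset_Icc_right L.le_succ)
  simp only [Finset.filter_forall_mem_sdiff_singleton]
  rw [Finset.card_image_of_injOn ((Finset.sdiff_injOn_powerset _).mono
      (fun S hS => hsub (Finset.mem_of_mem_filter S hS))),
    Finset.card_filter_nonempty_powerset, Nat.card_Icc, Nat.add_sub_cancel]

/-- For `I = {1,…,L+1}` and transactions `t i = I \ {i}` (`1 ≤ i ≤ L`), the number of
distinct (nonempty) intersections `⋂_{j ∈ S} t j` over nonempty `S ⊆ {1,…,L}` is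
`2 ^ L − 1`. Here the intersection over `S` of the transactions is rendered as the set
of items of `I` lying in every `t j`, `j ∈ S`. -/
theorem stmt6 (L : ℕ) (hL : 1 ≤ L) :
    (((Finset.Icc 1 L).powerset.filter (fun S => S.Nonempty)).image
      (fun S => (Finset.Icc 1 (L + 1)).filter
        (fun x => ∀ j ∈ S, x ∈ Finset.Icc 1 (L + 1) \ {j}))).card = 2 ^ L - 1 :=
  stmt6_general L
end

section
/- Correctness of Δ-compression: if e1, e2 are entries in the final table T_n satisfying α_{e1} ⊆ α_{e2} and c_{e1} ≤ c_{e2} − Δ_{e2} + Δ(n), then α_{e1} is Δ(n)-covered by α_{e2}, i.e., sup(α_{e1}, n) ≤ sup(α_{e2}, n) + Δ(n). -/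
/-- An entry of the table: stored itemset, frequency count and error count. -/
structure Entry where
  itemset : Finset ℕ
  count : ℕ
  err : ℕ

theorem stmt11_general (t : ℕ → Finset ℕ) (n Δn : ℕ) (e₁ e₂ : Entry)
    (hacc1 : e₁.count - e₁.err ≤ sup t e₁.itemset n ∧ sup t e₁.itemset n ≤ e₁.count)
    (hacc2 : e₂.count - e₂.err ≤ sup t e₂.itemset n ∧ sup t e₂.itemset n ≤ e₂.count)
    (hc : e₁.count ≤ e₂.count - e₂.err + Δn) :
    sup t e₁.itemset n ≤ sup t e₂.itemset n + Δn :=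
  calc sup t e₁.itemset n ≤ e₁.count := hacc1.2
    _ ≤ e₂.count - e₂.err + Δn := hc
    _ ≤ sup t e₂.itemset n + Δn := Nat.add_le_add_right hacc2.1 Δn

/-- Correctness of `Δ`-compression: if entries `e₁, e₂` satisfy the accuracy invariant,
`α_{e₁} ⊆ α_{e₂}` and `c_{e₁} ≤ c_{e₂} − Δ_{e₂} + Δ(n)`, then `α_{e₁}` is
`Δ(n)`-covered by `α_{e₂}`. -/
theorem stmt11 (t : ℕ → Finset ℕ) (n Δn : ℕ) (e₁ e₂ : Entry)
    (hacc1 : e₁.count - e₁.err ≤ sup t e₁.itemset n ∧ sup t e₁.itemset n ≤ e₁.count)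
    (hacc2 : e₂.count - e₂.err ≤ sup t e₂.itemset n ∧ sup t e₂.itemset n ≤ e₂.count)
    (hsub : e₁.itemset ⊆ e₂.itemset)
    (hc : e₁.count ≤ e₂.count - e₂.err + Δn) :
    sup t e₁.itemset n ≤ sup t e₂.itemset n + Δn :=
  stmt11_general t n Δn e₁ e₂ hacc1 hacc2 hc
end
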